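/- New double series identity (case i = 0 of Theorem results (2.3)/(2.4)): if (Δ_m) is a bounded sequence of complex numbers, ρ ∈ ℂ with ρ and 2−ρ not nonpositive integers (and the parameters below not nonpositive integers), then for all x ∈ ℂ: ∑_{m=0}^{∞} ∑_{n=0}^{∞} (−1)^n Δ_{m+n} x^{m+n} / ((ρ)_m (2−ρ)_n m! n!) = ∑_{m=0}^{∞} Δ_{2m} (−x²)^m / ( (1/2)_m ((ρ+1)/2)_m ((3−ρ)/2)_m 4^m m! ) + (2(1−ρ)x/(ρ(2−ρ))) ∑_{m=0}^{∞} Δ_{2m+1} (−x²)^m / ( (3/2)_m (ρ/2+1)_m (2−ρ/2)_m 4^m m! ). -/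

import Mathlib

/-!
The diagonal sums `c_N = ∑_{m+n=N} (-1)^n / ((ρ)_m (2-ρ)_n m! n!)` are the Taylor coefficients of
`₀F₁(; ρ; x) · ₀F₁(; 2-ρ; -x)`. Writing `ρ = 1 + α`, the coefficients `a_m` of the first factor
satisfy `m (m + α) a_m = a_{m-1}` and those of the second `n (n - α) b_n = -b_{n-1}`. Summing these
relations over an antidiagonal against the weights `1`, `m - n + α` and `(m - n + α)²` yields
`(N+1)(N+2)(ρ+N+1)(N+3-ρ) c_{N+2} = -4 c_N`, whose solutions on even and odd `N` are the two
hypergeometric terms on the right. Since `Δ` is bounded and `|(ρ)_m| ≥ r^m` for some `r > 0`, the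
double series converges absolutely, so it may be summed along antidiagonals and split by parity.
-/

noncomputable def poch (a : ℂ) (n : ℕ) : ℂ := (ascPochhammer ℂ n).eval a

open Finset

lemma poch_zero (a : ℂ) : poch a 0 = 1 := by simp [poch]

lemma poch_succ (a : ℂ) (n : ℕ) : poch a (n + 1) = poch a n * (a + n) := by
  simp [poch, ascPochhammer_succ_eval]

lemma poch_ne_zero {a : ℂ} (ha : ∀ k : ℕ, a ≠ -k) (n : ℕ) : poch a n ≠ 0 := by
  induction n with
  | zero => simp [poch_zero]
  | succ n ih => exact poch_succ a n ▸ mul_ne_zero ih fun h => ha n (eq_neg_of_add_eq_zero_left h)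

lemma ne_neg_natCast_of_re_pos {a : ℂ} (ha : 0 < a.re) (k : ℕ) : a ≠ -k := by
  rintro rfl
  simp only [Complex.neg_re, Complex.natCast_re, Left.neg_pos_iff] at ha
  linarith [k.cast_nonneg (α := ℝ)]

lemma exists_pos_le_norm_add_natCast {a : ℂ} (ha : ∀ k : ℕ, a ≠ -k) :
    ∃ r > 0, ∀ k : ℕ, r ≤ ‖a + k‖ := by
  obtain ⟨K, hK⟩ := exists_nat_gt (‖a‖ + 1)
  refine ⟨min 1 ((range K).inf' ?_ fun k => ‖a + k‖), ?_, fun k => ?_⟩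
  · exact ⟨0, mem_range.2 (by exact_mod_cast (norm_nonneg a).trans_lt ((lt_add_one _).trans hK))⟩
  · refine lt_min one_pos ((lt_inf'_iff _).2 fun k _ => norm_pos_iff.2 fun h => ?_)
    exact ha k (eq_neg_of_add_eq_zero_left h)
  rcases lt_or_ge k K with hk | hk
  · exact (min_le_right _ _).trans (inf'_le _ (mem_range.2 hk))
  · have hkK : (K : ℝ) ≤ k := by exact_mod_cast hk
    calc min 1 _ ≤ 1 := min_le_left _ _
      _ ≤ ‖(k : ℂ)‖ - ‖a‖ := by rw [Complex.norm_natCast]; linarith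
      _ ≤ ‖a + k‖ := by simpa [add_comm] using norm_sub_norm_le ((k : ℂ)) (-a)

lemma exists_pos_pow_le_norm_poch {a : ℂ} (ha : ∀ k : ℕ, a ≠ -k) :
    ∃ r > 0, ∀ n : ℕ, r ^ n ≤ ‖poch a n‖ := by
  obtain ⟨r, hr, hle⟩ := exists_pos_le_norm_add_natCast ha
  refine ⟨r, hr, fun n => ?_⟩
  induction n with
  | zero => simp [poch_zero]
  | succ n ih =>
    rw [poch_succ, pow_succ, norm_mul]
    exact mul_le_mul ih (hle n) hr.le (norm_nonneg _)

noncomputable def invPochFactorial (c : ℂ) (n : ℕ) : ℂ := (poch c n * n.factorial)⁻¹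

lemma summable_norm_pow_mul_invPochFactorial {c : ℂ} (hc : ∀ k : ℕ, c ≠ -k) (z : ℂ) :
    Summable fun n => ‖z ^ n * invPochFactorial c n‖ := by
  obtain ⟨r, hr, hle⟩ := exists_pos_pow_le_norm_poch hc
  refine (Real.summable_pow_div_factorial (‖z‖ / r)).of_nonneg_of_le (fun _ => norm_nonneg _)
    fun n => ?_
  rw [invPochFactorial, norm_mul, norm_inv, norm_mul, norm_pow, Complex.norm_natCast, div_pow,
    div_div, ← div_eq_mul_inv]
  gcongr
  exact hle n

lemma invPochFactorial_succ {c : ℂ} {n : ℕ} (h : c + n ≠ 0) :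
    (n + 1) * (c + n) * invPochFactorial c (n + 1) = invPochFactorial c n := by
  have hn : (n : ℂ) + 1 ≠ 0 := by exact_mod_cast n.succ_ne_zero
  rw [invPochFactorial, invPochFactorial, poch_succ, Nat.factorial_succ]
  push_cast
  field_simp

theorem HasSum.sum_antidiagonal {α A : Type*} [AddCommMonoid α] [TopologicalSpace α]
    [ContinuousAdd α] [RegularSpace α] [AddCommMonoid A] [HasAntidiagonal A]
    {f : A × A → α} {s : α} (hf : HasSum f s) :
    HasSum (fun n => ∑ p ∈ antidiagonal n, f p) s := by
  have := (HasAntidiagonal.sigmaAntidiagonalEquivProd.hasSum_iff.2 hf).sigma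
    fun n => hasSum_fintype _
  simpa [Finset.sum_attach] using this

section WeightedCauchy

variable {a b : ℕ → ℂ} {α : ℂ}

def weightedCauchyCoeff (a b : ℕ → ℂ) (w : ℕ → ℕ → ℂ) (N : ℕ) : ℂ :=
  ∑ p ∈ antidiagonal N, w p.1 p.2 * (a p.1 * b p.2)

lemma weightedCauchyCoeff_congr {w w' : ℕ → ℕ → ℂ} {N : ℕ}
    (h : ∀ m n : ℕ, (m : ℂ) + n = N → w m n = w' m n) :
    weightedCauchyCoeff a b w N = weightedCauchyCoeff a b w' N :=
  sum_congr rfl fun p hp => by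
    rw [h p.1 p.2 (by exact_mod_cast mem_antidiagonal.1 hp)]

lemma weightedCauchyCoeff_add (w w' : ℕ → ℕ → ℂ) (N : ℕ) :
    weightedCauchyCoeff a b (fun m n => w m n + w' m n) N
      = weightedCauchyCoeff a b w N + weightedCauchyCoeff a b w' N := by
  simp only [weightedCauchyCoeff, add_mul, sum_add_distrib]

lemma weightedCauchyCoeff_sub (w w' : ℕ → ℕ → ℂ) (N : ℕ) :
    weightedCauchyCoeff a b (fun m n => w m n - w' m n) N
      = weightedCauchyCoeff a b w N - weightedCauchyCoeff a b w' N := by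
  simp only [weightedCauchyCoeff, sub_mul, sum_sub_distrib]

lemma weightedCauchyCoeff_const_mul (c : ℂ) (w : ℕ → ℕ → ℂ) (N : ℕ) :
    weightedCauchyCoeff a b (fun m n => c * w m n) N = c * weightedCauchyCoeff a b w N := by
  simp only [weightedCauchyCoeff, mul_sum, mul_assoc]

lemma weightedCauchyCoeff_succ_left (ha : ∀ m : ℕ, (m + 1) * (m + 1 + α) * a (m + 1) = a m)
    (w : ℕ → ℕ → ℂ) (N : ℕ) :
    weightedCauchyCoeff a b (fun m n => m * (m + α) * w m n) (N + 1)
      = weightedCauchyCoeff a b (fun m n => w (m + 1) n) N := by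
  rw [weightedCauchyCoeff, Nat.sum_antidiagonal_succ]
  simp only [Nat.cast_zero, zero_mul, zero_add, Nat.cast_succ]
  refine sum_congr rfl fun p _ => ?_
  linear_combination w (p.1 + 1) p.2 * b p.2 * ha p.1

lemma weightedCauchyCoeff_succ_right (hb : ∀ n : ℕ, (n + 1) * (n + 1 - α) * b (n + 1) = -b n)
    (w : ℕ → ℕ → ℂ) (N : ℕ) :
    weightedCauchyCoeff a b (fun m n => n * (n - α) * w m n) (N + 1)
      = -weightedCauchyCoeff a b (fun m n => w m (n + 1)) N := by
  rw [weightedCauchyCoeff, Nat.sum_antidiagonal_succ', weightedCauchyCoeff, ← sum_neg_distrib]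
  simp only [Nat.cast_zero, zero_mul, zero_add, Nat.cast_succ]
  refine sum_congr rfl fun p _ => ?_
  linear_combination w p.1 (p.2 + 1) * a p.1 * hb p.2

theorem weightedCauchyCoeff_one_recurrence
    (ha : ∀ m : ℕ, (m + 1) * (m + 1 + α) * a (m + 1) = a m)
    (hb : ∀ n : ℕ, (n + 1) * (n + 1 - α) * b (n + 1) = -b n) (N : ℕ) :
    (N + 1) * (N + 2) * ((N + 2) ^ 2 - α ^ 2) * weightedCauchyCoeff a b (fun _ _ => 1) (N + 2)
      + 4 * weightedCauchyCoeff a b (fun _ _ => 1) N = 0 := by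
  -- On the antidiagonal `m + n = M`, with `e = m - n + α`:
  -- `m (m + α) - n (n - α) = M e` and `2 (m (m + α) + n (n - α)) = M² + e² - α²`.
  have hL := weightedCauchyCoeff_succ_left (b := b) ha
  have hR := weightedCauchyCoeff_succ_right (a := a) hb
  have moment_one : ∀ M : ℕ, (M + 1) * weightedCauchyCoeff a b (fun m n => m - n + α) (M + 1)
      = 2 * weightedCauchyCoeff a b (fun _ _ => 1) M := fun M => by
    rw [← weightedCauchyCoeff_const_mul, weightedCauchyCoeff_congr
      (w' := fun m n => m * (m + α) * 1 - n * (n - α) * 1), weightedCauchyCoeff_sub, hL, hR]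
    · ring
    · intro m n h
      push_cast at h
      linear_combination (-(m : ℂ) + n - α) * h
  have moment_two : ∀ M : ℕ, weightedCauchyCoeff a b (fun m n => (m - n + α) ^ 2) (M + 1)
      = (α ^ 2 - (M + 1) ^ 2) * weightedCauchyCoeff a b (fun _ _ => 1) (M + 1) := fun M => by
    rw [weightedCauchyCoeff_congr (w' := fun m n =>
        2 * (m * (m + α) * 1 + n * (n - α) * 1) + (α ^ 2 - (M + 1) ^ 2) * 1),
      weightedCauchyCoeff_add, weightedCauchyCoeff_const_mul, weightedCauchyCoeff_const_mul,
      weightedCauchyCoeff_add, hL, hR]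
    · ring
    · intro m n h
      push_cast at h
      linear_combination (-(m + n + M + 1) : ℂ) * h
  have moment_two_succ : ∀ M : ℕ,
      (M + 2) * weightedCauchyCoeff a b (fun m n => (m - n + α) ^ 2) (M + 2)
        = 2 * weightedCauchyCoeff a b (fun m n => m - n + α) (M + 1) := fun M => by
    rw [← weightedCauchyCoeff_const_mul, weightedCauchyCoeff_congr
      (w' := fun m n => m * (m + α) * (m - n + α) - n * (n - α) * (m - n + α)),
      weightedCauchyCoeff_sub, hL, hR, sub_neg_eq_add, ← weightedCauchyCoeff_add,
      ← weightedCauchyCoeff_const_mul]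
    · exact weightedCauchyCoeff_congr fun m n _ => by push_cast; ring
    · intro m n h
      push_cast at h
      linear_combination (-((m : ℂ) - n + α) ^ 2) * h
  have moment_two' := moment_two (N + 1)
  push_cast at moment_two'
  linear_combination
    (N + 1) * (N + 2) * moment_two' - (N + 1) * moment_two_succ N - 2 * moment_one N

end WeightedCauchy

lemma mul_poch_eq_of_recurrence {u : ℕ → ℂ} {a₁ a₂ a₃ q : ℂ}
    (hu : ∀ k : ℕ, 4 * (k + 1) * (a₁ + k) * (a₂ + k) * (a₃ + k) * u (k + 1) = q * u k) (k : ℕ) :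
    u k * (poch a₁ k * poch a₂ k * poch a₃ k * 4 ^ k * k.factorial) = u 0 * q ^ k := by
  induction k with
  | zero => simp [poch_zero]
  | succ k ih =>
    rw [poch_succ, poch_succ, poch_succ, Nat.factorial_succ, pow_succ, pow_succ]
    push_cast
    linear_combination
      poch a₁ k * poch a₂ k * poch a₃ k * 4 ^ k * k.factorial * hu k + q * ih

lemma eq_div_poch_of_recurrence {u : ℕ → ℂ} {a₁ a₂ a₃ q : ℂ} (h₁ : ∀ k : ℕ, a₁ ≠ -k)
    (h₂ : ∀ k : ℕ, a₂ ≠ -k) (h₃ : ∀ k : ℕ, a₃ ≠ -k)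
    (hu : ∀ k : ℕ, 4 * (k + 1) * (a₁ + k) * (a₂ + k) * (a₃ + k) * u (k + 1) = q * u k) (k : ℕ) :
    u k = u 0 * q ^ k / (poch a₁ k * poch a₂ k * poch a₃ k * 4 ^ k * k.factorial) := by
  have hD : poch a₁ k * poch a₂ k * poch a₃ k * 4 ^ k * k.factorial ≠ 0 := by
    simp [poch_ne_zero h₁, poch_ne_zero h₂, poch_ne_zero h₃, Nat.factorial_ne_zero]
  exact eq_div_of_mul_eq hD (mul_poch_eq_of_recurrence hu k)

noncomputable def antidiagonalCoeff (ρ : ℂ) (N : ℕ) : ℂ :=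
  weightedCauchyCoeff (invPochFactorial ρ) (fun n => (-1) ^ n * invPochFactorial (2 - ρ) n)
    (fun _ _ => 1) N

lemma antidiagonalCoeff_recurrence {ρ : ℂ} (hρ : ∀ k : ℕ, ρ ≠ -k) (hρ' : ∀ k : ℕ, 2 - ρ ≠ -k)
    (N : ℕ) : (N + 1) * (N + 2) * (ρ + N + 1) * (N + 3 - ρ) * antidiagonalCoeff ρ (N + 2)
      = -4 * antidiagonalCoeff ρ N := by
  have h := weightedCauchyCoeff_one_recurrence (a := invPochFactorial ρ)
    (b := fun n => (-1) ^ n * invPochFactorial (2 - ρ) n) (α := ρ - 1) (fun m => ?_) (fun n => ?_) N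
  · rw [antidiagonalCoeff, antidiagonalCoeff]
    linear_combination h
  · rw [← invPochFactorial_succ fun h => hρ m (eq_neg_of_add_eq_zero_left h)]
    ring
  · rw [← invPochFactorial_succ fun h => hρ' n (eq_neg_of_add_eq_zero_left h)]
    ring

lemma antidiagonalCoeff_zero (ρ : ℂ) : antidiagonalCoeff ρ 0 = 1 := by
  simp [antidiagonalCoeff, weightedCauchyCoeff, invPochFactorial, poch_zero]

lemma antidiagonalCoeff_one {ρ : ℂ} (hρ : ρ ≠ 0) (hρ' : 2 - ρ ≠ 0) :
    antidiagonalCoeff ρ 1 = 2 * (1 - ρ) / (ρ * (2 - ρ)) := by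
  rw [antidiagonalCoeff, weightedCauchyCoeff, Nat.sum_antidiagonal_succ]
  simp only [invPochFactorial, poch_zero, Nat.factorial_zero, Nat.cast_one, mul_one, inv_one,
    zero_add, pow_one, poch_succ, CharP.cast_eq_zero, add_zero, one_mul, Nat.factorial_one,
    neg_mul, mul_neg, HasAntidiagonal.antidiagonal_zero, mul_inv_rev, sum_singleton, pow_zero]
  field_simp
  ring

lemma antidiagonalCoeff_two_mul {ρ : ℂ} (hρ : ∀ k : ℕ, ρ ≠ -k) (hρ' : ∀ k : ℕ, 2 - ρ ≠ -k)
    (h₁ : ∀ k : ℕ, (ρ + 1) / 2 ≠ -k) (h₂ : ∀ k : ℕ, (3 - ρ) / 2 ≠ -k) (k : ℕ) :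
    antidiagonalCoeff ρ (2 * k) = (-1) ^ k /
      (poch (1 / 2) k * poch ((ρ + 1) / 2) k * poch ((3 - ρ) / 2) k * 4 ^ k * k.factorial) := by
  rw [eq_div_poch_of_recurrence (u := fun k => antidiagonalCoeff ρ (2 * k))
    (ne_neg_natCast_of_re_pos (a := 1 / 2) (by norm_num)) h₁ h₂ (fun k => ?_) k, mul_zero,
    antidiagonalCoeff_zero, one_mul]
  have h := antidiagonalCoeff_recurrence hρ hρ' (2 * k)
  rw [show 2 * (k + 1) = 2 * k + 2 by ring]
  push_cast at h
  linear_combination h / 4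

lemma antidiagonalCoeff_two_mul_add_one {ρ : ℂ} (hρ : ∀ k : ℕ, ρ ≠ -k) (hρ' : ∀ k : ℕ, 2 - ρ ≠ -k)
    (h₃ : ∀ k : ℕ, ρ / 2 + 1 ≠ -k) (h₄ : ∀ k : ℕ, 2 - ρ / 2 ≠ -k) (k : ℕ) :
    antidiagonalCoeff ρ (2 * k + 1) = 2 * (1 - ρ) / (ρ * (2 - ρ)) * ((-1) ^ k /
      (poch (3 / 2) k * poch (ρ / 2 + 1) k * poch (2 - ρ / 2) k * 4 ^ k * k.factorial)) := by
  rw [eq_div_poch_of_recurrence (u := fun k => antidiagonalCoeff ρ (2 * k + 1))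
    (ne_neg_natCast_of_re_pos (a := 3 / 2) (by norm_num)) h₃ h₄ (fun k => ?_) k, mul_zero,
    zero_add, antidiagonalCoeff_one (by simpa using hρ 0) (by simpa using hρ' 0), mul_div_assoc]
  have h := antidiagonalCoeff_recurrence hρ hρ' (2 * k + 1)
  rw [show 2 * (k + 1) + 1 = 2 * k + 1 + 2 by ring]
  push_cast at h
  linear_combination h / 4

theorem hasSum_antidiagonalCoeff {Δ : ℕ → ℂ} {C : ℝ} (hC : ∀ m : ℕ, ‖Δ m‖ ≤ C) {ρ : ℂ}
    (hρ : ∀ k : ℕ, ρ ≠ -k) (hρ' : ∀ k : ℕ, 2 - ρ ≠ -k) (x : ℂ) :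
    HasSum (fun N => Δ N * x ^ N * antidiagonalCoeff ρ N)
      (∑' (m : ℕ), ∑' (n : ℕ), (-1 : ℂ) ^ n * Δ (m + n) * x ^ (m + n) /
        (poch ρ m * poch (2 - ρ) n * m.factorial * n.factorial)) := by
  set f : ℕ → ℂ := fun m => x ^ m * invPochFactorial ρ m
  set g : ℕ → ℂ := fun n => (-x) ^ n * invPochFactorial (2 - ρ) n
  have hterm : ∀ m n : ℕ, (-1 : ℂ) ^ n * Δ (m + n) * x ^ (m + n) /
      (poch ρ m * poch (2 - ρ) n * m.factorial * n.factorial) = Δ (m + n) * (f m * g n) :=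
    fun m n => by simp only [f, g, invPochFactorial, neg_pow x, pow_add]; ring
  have hsum : Summable fun p : ℕ × ℕ => Δ (p.1 + p.2) * (f p.1 * g p.2) := by
    have hfg := (summable_norm_pow_mul_invPochFactorial hρ x).mul_norm
      (summable_norm_pow_mul_invPochFactorial hρ' (-x))
    refine .of_norm_bounded (hfg.mul_left C) fun p => ?_
    rw [norm_mul]
    exact mul_le_mul_of_nonneg_right (hC _) (norm_nonneg _)
  have hdiag : ∀ N, ∑ p ∈ antidiagonal N, Δ (p.1 + p.2) * (f p.1 * g p.2)
      = Δ N * x ^ N * antidiagonalCoeff ρ N := fun N => by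
    rw [antidiagonalCoeff, weightedCauchyCoeff, mul_sum]
    refine sum_congr rfl fun p hp => ?_
    rw [← mem_antidiagonal.1 hp]
    simp only [f, g, neg_pow x, pow_add]
    ring
  rw [tsum_congr fun m => tsum_congr (hterm m), ← hsum.tsum_prod' hsum.prod_factor]
  simpa only [hdiag] using hsum.hasSum.sum_antidiagonal

theorem stmt8 (Δ : ℕ → ℂ) (hΔ : ∃ C : ℝ, ∀ m : ℕ, ‖Δ m‖ ≤ C)
    (ρ : ℂ) (hρ : ∀ k : ℕ, ρ ≠ -(k : ℂ)) (hρ' : ∀ k : ℕ, 2 - ρ ≠ -(k : ℂ))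
    (h1 : ∀ k : ℕ, (ρ + 1) / 2 ≠ -(k : ℂ)) (h2 : ∀ k : ℕ, (3 - ρ) / 2 ≠ -(k : ℂ))
    (h3 : ∀ k : ℕ, ρ / 2 + 1 ≠ -(k : ℂ)) (h4 : ∀ k : ℕ, 2 - ρ / 2 ≠ -(k : ℂ))
    (x : ℂ) :
    ∑' (m : ℕ), ∑' (n : ℕ),
        (-1 : ℂ) ^ n * Δ (m + n) * x ^ (m + n) /
          (poch ρ m * poch (2 - ρ) n * m.factorial * n.factorial)
      = (∑' (m : ℕ), Δ (2 * m) * (-x ^ 2) ^ m /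
            (poch (1 / 2) m * poch ((ρ + 1) / 2) m * poch ((3 - ρ) / 2) m *
              (4 : ℂ) ^ m * m.factorial))
        + (2 * (1 - ρ) * x / (ρ * (2 - ρ))) *
          ∑' (m : ℕ), Δ (2 * m + 1) * (-x ^ 2) ^ m /
            (poch (3 / 2) m * poch (ρ / 2 + 1) m * poch (2 - ρ / 2) m *
              (4 : ℂ) ^ m * m.factorial) := by
  obtain ⟨C, hC⟩ := hΔ
  have hN := hasSum_antidiagonalCoeff hC hρ hρ' x
  rw [← hN.tsum_eq, ← tsum_even_add_odd (f := fun N => Δ N * x ^ N * antidiagonalCoeff ρ N)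
    (hN.summable.comp_injective fun _ _ h => by omega)
    (hN.summable.comp_injective fun _ _ h => by omega), ← tsum_mul_left]
  congr 1 <;> refine tsum_congr fun k => ?_
  · rw [antidiagonalCoeff_two_mul hρ hρ' h1 h2, pow_mul, neg_pow (x ^ 2)]
    ring
  · rw [antidiagonalCoeff_two_mul_add_one hρ hρ' h3 h4, pow_succ, pow_mul, neg_pow (x ^ 2)]
    ring
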